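/- If a and b are involutions in S₇ generating a subgroup isomorphic to the dihedral group D₇ of order 14, then a is a product of exactly 3 disjoint transpositions (equivalently, a fixes exactly one element of {1,...,7}), and similarly for b, and the fixed points of a and b are distinct. -/

import Mathlib

/-!
Write `c = a * b`. The subgroup `⟨a, b⟩` has order `14` and is not abelian, so `c` has order `7`:
order dividing `2` would make `a` and `b` commute, order `14` would make `⟨a, b⟩` cyclic.
An element of order `7` in `S₇` is a `7`-cycle, hence fixes no point. Both `a` and `b` conjugate
`c` to `c⁻¹`, so `a (cⁿ x) = c⁻ⁿ (a x)`: writing `a x = cᵐ x`, the point `cʲ x` is fixed by `a`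
exactly when `2j ≡ m (mod 7)`, which has a unique solution. Finally, a common fixed point of `a`
and `b` would be fixed by `c`.
-/

open Equiv Equiv.Perm

theorem MulEquiv.isMulCommutative {M N : Type*} [Mul M] [Mul N] (e : M ≃* N)
    [IsMulCommutative M] : IsMulCommutative N :=
  .of_comm fun x y ↦ e.symm.injective (by rw [map_mul, map_mul, mul_comm'])

section Involutions

variable {G : Type*} [Group G] {a b : G}

theorem commute_of_orderOf_mul_dvd_two (ha : a⁻¹ = a) (hb : b⁻¹ = b)
    (h : orderOf (a * b) ∣ 2) : Commute a b := by
  have hsq : (a * b) ^ 2 = 1 := orderOf_dvd_iff_pow_eq_one.mp h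
  calc a * b = (a * b)⁻¹ := (inv_eq_of_mul_eq_one_left (by rw [← sq, hsq])).symm
    _ = b * a := by rw [mul_inv_rev, ha, hb]

theorem isMulCommutative_closure_pair (hab : Commute a b) :
    IsMulCommutative (Subgroup.closure {a, b}) :=
  Subgroup.isMulCommutative_closure <| by
    rintro x (rfl | rfl) y (rfl | rfl) <;> first | rfl | exact hab | exact hab.symm

theorem semiconjBy_mul_inv_left (ha : a⁻¹ = a) (hb : b⁻¹ = b) :
    SemiconjBy a (a * b) (a * b)⁻¹ := by
  rw [SemiconjBy, mul_inv_rev, inv_mul_cancel_right, hb, ← mul_assoc,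
    mul_eq_one_iff_eq_inv.mpr ha.symm, one_mul]

theorem semiconjBy_mul_inv_right (ha : a⁻¹ = a) (hb : b⁻¹ = b) :
    SemiconjBy b (a * b) (a * b)⁻¹ := by
  rw [SemiconjBy, mul_inv_rev, ha, hb, mul_assoc]

theorem orderOf_mul_eq_of_card_closure_pair {p : ℕ} (hp : p.Prime) (ha : a⁻¹ = a)
    (hb : b⁻¹ = b) (hcard : Nat.card (Subgroup.closure {a, b}) = 2 * p)
    (hnc : ¬IsMulCommutative (Subgroup.closure {a, b})) :
    orderOf (a * b) = p := by
  set H := Subgroup.closure {a, b}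
  have habH : a * b ∈ H :=
    mul_mem (Subgroup.subset_closure (by simp)) (Subgroup.subset_closure (by simp))
  have : Finite H := Nat.finite_of_card_ne_zero (by simp [hcard, hp.ne_zero])
  have hdvd : orderOf (a * b) ∣ 2 * p := by
    rw [← hcard, ← Subgroup.orderOf_mk (a * b) habH]
    exact orderOf_dvd_natCard _
  have hnot_dvd_two : ¬orderOf (a * b) ∣ 2 := fun h ↦
    hnc (isMulCommutative_closure_pair (commute_of_orderOf_mul_dvd_two ha hb h))
  have hne_card : orderOf (a * b) ≠ 2 * p := fun h ↦
    hnc (isCyclic_of_orderOf_eq_card ⟨a * b, habH⟩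
      (by rw [Subgroup.orderOf_mk, h, hcard])).isMulCommutative
  obtain ⟨y, z, hy, hz, hyz⟩ := Nat.dvd_mul.mp hdvd
  rcases (Nat.dvd_prime Nat.prime_two).mp hy with rfl | rfl <;>
    rcases (Nat.dvd_prime hp).mp hz with rfl | rfl <;>
    simp_all

end Involutions

namespace Equiv.Perm

variable {α : Type*}

theorem apply_ne_self_of_orderOf_eq_card [Fintype α] {c : Perm α}
    (hp : (Fintype.card α).Prime) (hc : orderOf c = Fintype.card α) (x : α) : c x ≠ x := by
  classical
  have hsupp : c.support = Finset.univ :=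
    Finset.eq_univ_of_card _ ((isCycle_of_prime_order'' hp hc).orderOf ▸ hc)
  exact mem_support.mp (hsupp ▸ Finset.mem_univ x)

variable [Finite α] {c u : Perm α}

theorem IsCycle.exists_apply_eq_self_of_semiconjBy_inv [Nonempty α] (hc : c.IsCycle)
    (hfix : ∀ x, c x ≠ x) (hodd : Odd (orderOf c)) (huc : SemiconjBy u c c⁻¹) :
    ∃ x, u x = x := by
  obtain ⟨t, ht⟩ := hodd
  obtain ⟨x⟩ := ‹Nonempty α›
  obtain ⟨m, hm⟩ := hc.exists_pow_eq (hfix x) (hfix (u x))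
  -- `t + 1` inverts `2` modulo `orderOf c = 2 * t + 1`.
  set j := (t + 1) * m with hj
  refine ⟨(c ^ j) x, (c ^ j).injective ?_⟩
  have hu : u ((c ^ j) x) = (c⁻¹ ^ j) (u x) := DFunLike.congr_fun (huc.pow_right j) x
  calc (c ^ j) (u ((c ^ j) x)) = (c ^ m) x := by
        rw [hu, ← hm, inv_pow, ← mul_apply, mul_inv_cancel, one_apply]
    _ = (c ^ (m + orderOf c * m)) x := by
        rw [pow_add, pow_mul, pow_orderOf_eq_one, one_pow, mul_one]
    _ = (c ^ j) ((c ^ j) x) := by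
        rw [← mul_apply, ← pow_add, ht, hj]; congr 2; ring

theorem IsCycle.eq_of_apply_eq_self_of_semiconjBy_inv (hc : c.IsCycle) (hfix : ∀ x, c x ≠ x)
    (hodd : Odd (orderOf c)) (huc : SemiconjBy u c c⁻¹) {x y : α} (hx : u x = x)
    (hy : u y = y) : x = y := by
  obtain ⟨n, rfl⟩ := hc.exists_pow_eq (hfix x) (hfix y)
  have hu : u ((c ^ n) x) = (c⁻¹ ^ n) (u x) := DFunLike.congr_fun (huc.pow_right n) x
  rw [hy, hx] at hu
  have h2n : (c ^ (2 * n)) x = x := by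
    rw [two_mul, pow_add, mul_apply, hu, inv_pow, ← mul_apply, mul_inv_cancel, one_apply]
  have hn : c ^ n = 1 := by
    rw [← orderOf_dvd_iff_pow_eq_one]
    exact (Nat.coprime_two_right.mpr hodd).dvd_of_dvd_mul_left
      (orderOf_dvd_iff_pow_eq_one.mpr ((hc.pow_eq_one_iff' (hfix x)).mpr h2n))
  rw [hn, one_apply]

theorem IsCycle.existsUnique_apply_eq_self_of_semiconjBy_inv [Nonempty α] (hc : c.IsCycle)
    (hfix : ∀ x, c x ≠ x) (hodd : Odd (orderOf c)) (huc : SemiconjBy u c c⁻¹) :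
    ∃! x, u x = x :=
  let ⟨x, hx⟩ := hc.exists_apply_eq_self_of_semiconjBy_inv hfix hodd huc
  ⟨x, hx, fun _ hy ↦ (hc.eq_of_apply_eq_self_of_semiconjBy_inv hfix hodd huc hx hy).symm⟩

end Equiv.Perm

/-- If involutions `a, b ∈ S₇` generate a subgroup isomorphic to `D₇`, then each of
`a` and `b` fixes exactly one element of `{1,…,7}` (equivalently, is a product of three
disjoint transpositions), and their fixed points are distinct. -/
theorem involutions_gen_dihedral_fixed_points
    (a b : Equiv.Perm (Fin 7)) (ha : orderOf a = 2) (hb : orderOf b = 2)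
    (h : Nonempty (↥(Subgroup.closure ({a, b} : Set (Equiv.Perm (Fin 7)))) ≃* DihedralGroup 7)) :
    (∃! i : Fin 7, a i = i) ∧ (∃! i : Fin 7, b i = i) ∧
      ∀ i j : Fin 7, a i = i → b j = j → i ≠ j := by
  obtain ⟨e⟩ := h
  have ha' := inv_eq_self_of_orderOf_eq_two ha
  have hb' := inv_eq_self_of_orderOf_eq_two hb
  have hcard : Nat.card (Subgroup.closure {a, b}) = 2 * 7 := by
    rw [Nat.card_congr e.toEquiv, DihedralGroup.nat_card]
  have hnc : ¬IsMulCommutative (Subgroup.closure {a, b}) := fun _ ↦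
    DihedralGroup.not_commutative (by norm_num) (by norm_num) e.isMulCommutative
  have hc : orderOf (a * b) = Fintype.card (Fin 7) := by
    rw [orderOf_mul_eq_of_card_closure_pair (by norm_num) ha' hb' hcard hnc, Fintype.card_fin]
  have hprime : (Fintype.card (Fin 7)).Prime := by norm_num
  have hcyc := isCycle_of_prime_order'' hprime hc
  have hfix := apply_ne_self_of_orderOf_eq_card hprime hc
  have hodd : Odd (orderOf (a * b)) := by rw [hc]; decide
  refine ⟨hcyc.existsUnique_apply_eq_self_of_semiconjBy_inv hfix hodd
      (semiconjBy_mul_inv_left ha' hb'),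
    hcyc.existsUnique_apply_eq_self_of_semiconjBy_inv hfix hodd
      (semiconjBy_mul_inv_right ha' hb'), ?_⟩
  rintro i _ hi hj rfl
  exact hfix i (by rw [mul_apply, hj, hi])
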